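/- Let 𝒞 ⊆ 𝔞 be a nonempty finitely generated convex set with asymptotic cone C. Then the dual cone C∨ is the disjoint union of the cones 𝔞_F^+ over all faces F of 𝒞: the sets 𝔞_F^+, for F ∈ ℱ(𝒞), are pairwise disjoint, each is contained in C∨, and their union equals C∨. -/

import Mathlib

/-!
Write `𝒞 = {X | ∀ p ∈ s, (p.1, X) ≤ p.2}`. A vector `Y` lies in the normal cone at `X` iff `X`
maximises `(Y, ·)` on `𝒞`. If moreover `X` lies in the relative interior of a face `F` and `Y` in
the relative interior of `N_𝒞(X)`, then `F` is exactly the set where `(Y, ·)` is maximal, which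
gives disjointness.

Conversely, for `Y ∈ C∨` Farkas' lemma writes `Y` as a nonnegative combination of the `p.1`, so
`(Y, ·)` is bounded above on `𝒞`, and Gale's theorem of the alternative shows that it attains its
maximum, on a face `F`. At a relative-interior point `X` of `F` the tangent cone is the polyhedral
cone `D` cut out by the active constraints, and the directions of `D` orthogonal to `Y` form its
lineality space `L`. Compactness of the unit sphere of `D ∩ Lᗮ` then puts `Y` in the relative
interior of `N_𝒞(X) = D°`.
-/

open Pointwise

variable {E : Type*} [NormedAddCommGroup E] [InnerProductSpace ℝ E] [FiniteDimensional ℝ E]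

/-- A finitely generated convex set: a finite intersection of closed half-spaces. -/
def IsFGConvex (C : Set E) : Prop :=
  ∃ s : Finset (E × ℝ), C = {X | ∀ p ∈ s, (inner ℝ p.1 X : ℝ) ≤ p.2}

/-- The tangent cone `T_C(H) = ℝ≥0 · (C - H)`. -/
def tangCone (C : Set E) (H : E) : Set E :=
  {X | ∃ t : ℝ, 0 ≤ t ∧ ∃ c ∈ C, X = t • (c - H)}

/-- The normal cone `N_C(H) = {Y | (Y,X) ≤ 0 for all X ∈ T_C(H)}`. -/
def normCone (C : Set E) (H : E) : Set E :=
  {Y | ∀ X ∈ tangCone C H, (inner ℝ Y X : ℝ) ≤ 0}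

/-- The asymptotic cone of `C`: the set of `X` with `C + ℝ≥0 · X = C`. -/
def asympCone (C : Set E) : Set E :=
  {X | C + {Y | ∃ t : ℝ, 0 ≤ t ∧ Y = t • X} = C}

/-- The dual cone `C∨ = {Y | (Y,X) ≤ 0 for all X ∈ C}`. -/
def polarCone (C : Set E) : Set E :=
  {Y | ∀ X ∈ C, (inner ℝ Y X : ℝ) ≤ 0}

/-- A face of `C`: the (nonempty) intersection of `C` with a supporting affine hyperplane
`{H | (λ,H) = c}`, where `(λ,H) ≤ c` on all of `C` (the case `λ = 0` being allowed). -/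
def IsFace (C F : Set E) : Prop :=
  F.Nonempty ∧ ∃ (lam : E) (c : ℝ), (∀ H ∈ C, (inner ℝ lam H : ℝ) ≤ c) ∧
    F = {H | H ∈ C ∧ (inner ℝ lam H : ℝ) = c}

/-- `𝔞_F^+`: the relative interior of the normal cone `N_C(X_F)`, for `X_F` in the relative
interior of the face `F` (this normal cone does not depend on the choice of such `X_F`). -/
def aFplus (C F : Set E) : Set E :=
  ⋃ X ∈ intrinsicInterior ℝ F, intrinsicInterior ℝ (normCone C X)

open RealInnerProductSpace Filter Topology

variable {V : Type*}

section IntrinsicInterior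

variable [NormedAddCommGroup V] [NormedSpace ℝ V]

theorem mem_intrinsicInterior_iff_forall_dist_lt {s : Set V} {x : V} :
    x ∈ intrinsicInterior ℝ s ↔
      x ∈ s ∧ ∃ δ > 0, ∀ z ∈ affineSpan ℝ s, dist z x < δ → z ∈ s := by
  constructor
  · intro hx
    obtain ⟨y, hy, rfl⟩ := mem_intrinsicInterior.1 hx
    obtain ⟨δ, hδ, hball⟩ := Metric.mem_nhds_iff.1 (mem_interior_iff_mem_nhds.1 hy)
    exact ⟨intrinsicInterior_subset hx, δ, hδ, fun z hz hzy => @hball ⟨z, hz⟩ hzy⟩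
  · rintro ⟨hxs, δ, hδ, hball⟩
    refine mem_intrinsicInterior.2 ⟨⟨x, subset_affineSpan ℝ s hxs⟩, ?_, rfl⟩
    rw [mem_interior_iff_mem_nhds, Metric.mem_nhds_iff]
    exact ⟨δ, hδ, fun z hz => hball z z.2 hz⟩

theorem exists_add_smul_sub_mem_of_mem_intrinsicInterior {s : Set V} {x y : V}
    (hx : x ∈ intrinsicInterior ℝ s) (hy : y ∈ s) : ∃ ε > (0 : ℝ), x + ε • (x - y) ∈ s := by
  obtain ⟨hxs, δ, hδ, hball⟩ := mem_intrinsicInterior_iff_forall_dist_lt.1 hx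
  have hspan (t : ℝ) : x + t • (x - y) ∈ affineSpan ℝ s := by
    simpa [vsub_eq_sub, vadd_eq_add, add_comm] using AffineSubspace.smul_vsub_vadd_mem _ t
      (subset_affineSpan ℝ s hxs) (subset_affineSpan ℝ s hy) (subset_affineSpan ℝ s hxs)
  have hnear : ∀ᶠ t in 𝓝[>] (0 : ℝ), dist (x + t • (x - y)) x < δ := by
    have hcont : Tendsto (fun t : ℝ => x + t • (x - y)) (𝓝 0) (𝓝 x) := by
      have : Continuous fun t : ℝ => x + t • (x - y) := by fun_prop
      simpa using this.tendsto 0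
    exact nhdsWithin_le_nhds (hcont (Metric.ball_mem_nhds x hδ))
  obtain ⟨ε, hε, hεx⟩ := (eventually_mem_nhdsWithin.and hnear).exists
  exact ⟨ε, hε, hball _ (hspan ε) hεx⟩

end IntrinsicInterior

section PolarCone

variable [NormedAddCommGroup V] [InnerProductSpace ℝ V]

theorem polarCone_anti {A B : Set V} (h : A ⊆ B) : polarCone B ⊆ polarCone A :=
  fun _ hY X hX => hY X (h hX)

theorem isClosed_polarCone (A : Set V) : IsClosed (polarCone A) := by
  simp only [polarCone, Set.ofPred_forall]
  exact isClosed_biInter fun X _ => isClosed_le (by fun_prop) continuous_const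

theorem exists_pos_inner_le_neg_mul_norm [FiniteDimensional ℝ V] {S : Set V} (hS : IsClosed S)
    (hsmul : ∀ w ∈ S, ∀ c : ℝ, 0 < c → c • w ∈ S) {Y : V}
    (hY : ∀ w ∈ S, w ≠ 0 → ⟪Y, w⟫ < 0) : ∃ δ > (0 : ℝ), ∀ w ∈ S, ⟪Y, w⟫ ≤ -(δ * ‖w‖) := by
  have hK : IsCompact (S ∩ Metric.sphere 0 1) := (isCompact_sphere 0 1).inter_left hS
  obtain ⟨δ, hδ, hbound⟩ := hK.exists_forall_le' (f := fun w => -⟪Y, w⟫) (a := 0)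
    (by fun_prop) fun w hw => neg_pos.2 (hY w hw.1 (ne_zero_of_mem_unit_sphere ⟨w, hw.2⟩))
  refine ⟨δ, hδ, fun w hw => ?_⟩
  rcases eq_or_ne w 0 with rfl | hw0
  · simp
  have hn : 0 < ‖w‖ := norm_pos_iff.2 hw0
  have hunit := hbound (‖w‖⁻¹ • w) ⟨hsmul w hw _ (inv_pos.2 hn), by simp [norm_smul, hn.ne']⟩
  rw [real_inner_smul_right] at hunit
  have := mul_le_mul_of_nonneg_left hunit hn.le
  rw [mul_neg, ← mul_assoc, mul_inv_cancel₀ hn.ne', one_mul] at this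
  linarith

/-- The lineality space `polarCone A ∩ -polarCone A` of `polarCone A`. -/
noncomputable def polarLineality (A : Set V) : Submodule ℝ V :=
  ⨅ a ∈ A, LinearMap.ker (innerₗ V a)

variable {A : Set V}

theorem mem_polarLineality {W : V} : W ∈ polarLineality A ↔ ∀ a ∈ A, ⟪W, a⟫ = 0 := by
  simp [polarLineality, real_inner_comm]

theorem smul_mem_polarCone {c : ℝ} {W : V} (hc : 0 ≤ c) (hW : W ∈ polarCone A) :
    c • W ∈ polarCone A := fun a ha => by
  rw [real_inner_smul_left]
  exact mul_nonpos_of_nonneg_of_nonpos hc (hW a ha)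

theorem mem_polarLineality_of_mem_polarCone {W : V} (h₁ : W ∈ polarCone A)
    (h₂ : -W ∈ polarCone A) : W ∈ polarLineality A :=
  mem_polarLineality.2 fun a ha =>
    (h₁ a ha).antisymm (by simpa [inner_neg_left] using h₂ a ha)

theorem mem_orthogonal_polarLineality_of_mem_affineSpan {Z : V}
    (hZ : Z ∈ affineSpan ℝ (polarCone (polarCone A))) : Z ∈ (polarLineality A)ᗮ := by
  refine (Submodule.mem_toAffineSubspace).1 (affineSpan_le.2 (fun Z' hZ' => ?_) hZ)
  refine ((polarLineality A)ᗮ.mem_toAffineSubspace).2 <|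
    (Submodule.mem_orthogonal' _ _).2 fun W hW => ?_
  have hWA := mem_polarLineality.1 hW
  have h₁ := hZ' W fun a ha => (hWA a ha).le
  have h₂ := hZ' (-W) fun a ha => by simp [inner_neg_left, hWA a ha]
  rw [inner_neg_right] at h₂
  linarith

theorem sub_mem_polarCone {W U : V} (hW : W ∈ polarCone A) (hU : U ∈ polarLineality A) :
    W - U ∈ polarCone A := fun a ha => by
  rw [inner_sub_left, mem_polarLineality.1 hU a ha, sub_zero]
  exact hW a ha

theorem mem_intrinsicInterior_polarCone_polarCone [FiniteDimensional ℝ V] {Y : V}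
    (hY : Y ∈ polarCone (polarCone A))
    (hlin : ∀ W ∈ polarCone A, ⟪Y, W⟫ = 0 → -W ∈ polarCone A) :
    Y ∈ intrinsicInterior ℝ (polarCone (polarCone A)) := by
  set L := polarLineality A
  obtain ⟨δ, hδ, hbound⟩ := exists_pos_inner_le_neg_mul_norm
    ((isClosed_polarCone A).inter L.isClosed_orthogonal)
    (fun w hw c hc => ⟨smul_mem_polarCone hc.le hw.1, L.orthogonal.smul_mem c hw.2⟩)
    (fun w hw hw0 => (hY w hw.1).lt_of_ne fun h => hw0 <| Submodule.disjoint_def.1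
      L.orthogonal_disjoint w (mem_polarLineality_of_mem_polarCone hw.1 (hlin w hw.1 h)) hw.2)
  refine mem_intrinsicInterior_iff_forall_dist_lt.2 ⟨hY, δ, hδ, fun Z hZ hZY W hW => ?_⟩
  set W' := W - L.starProjection W
  have hZW : ⟪Z, W⟫ = ⟪Z, W'⟫ := by
    rw [inner_sub_right, (Submodule.mem_orthogonal' _ _).1
      (mem_orthogonal_polarLineality_of_mem_affineSpan hZ) _ (L.starProjection_apply_mem W),
      sub_zero]
  have hYW' := hbound W'
    ⟨sub_mem_polarCone hW (L.starProjection_apply_mem W), L.sub_starProjection_mem_orthogonal W⟩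
  have hcs : ⟪Z - Y, W'⟫ ≤ dist Z Y * ‖W'‖ := dist_eq_norm Z Y ▸ real_inner_le_norm _ _
  rw [inner_sub_left] at hcs
  rw [hZW]
  nlinarith [mul_nonneg (sub_nonneg.2 hZY.le) (norm_nonneg W')]

end PolarCone

section ConicHull

variable [NormedAddCommGroup V] [NormedSpace ℝ V] {ι : Type*}

def conicHull (v : ι → V) (s : Finset ι) : Set V :=
  {x | ∃ t : ι → ℝ, (∀ i ∈ s, 0 ≤ t i) ∧ ∑ i ∈ s, t i • v i = x}

variable {v : ι → V} {s T : Finset ι}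

theorem zero_mem_conicHull : (0 : V) ∈ conicHull v s :=
  ⟨0, fun _ _ => le_rfl, by simp⟩

theorem mem_conicHull_of_mem {i : ι} (hi : i ∈ s) : v i ∈ conicHull v s := by
  classical
  exact ⟨fun k => if k = i then 1 else 0, fun k _ => by dsimp only; split_ifs <;> norm_num,
    by simp [ite_smul, hi]⟩

theorem smul_mem_conicHull {c : ℝ} {x : V} (hc : 0 ≤ c) (hx : x ∈ conicHull v s) :
    c • x ∈ conicHull v s := by
  obtain ⟨t, ht, rfl⟩ := hx
  exact ⟨c • t, fun i hi => mul_nonneg hc (ht i hi), by simp [Finset.smul_sum, mul_smul]⟩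

theorem convex_conicHull (v : ι → V) (s : Finset ι) : Convex ℝ (conicHull v s) := by
  rintro _ ⟨t, ht, rfl⟩ _ ⟨u, hu, rfl⟩ a b ha hb -
  refine ⟨a • t + b • u, fun i hi => ?_, ?_⟩
  · simp only [Pi.add_apply, Pi.smul_apply, smul_eq_mul]
    exact add_nonneg (mul_nonneg ha (ht i hi)) (mul_nonneg hb (hu i hi))
  · simp [add_smul, mul_smul, Finset.sum_add_distrib, Finset.smul_sum]

theorem conicHull_mono (h : T ⊆ s) : conicHull v T ⊆ conicHull v s := by
  classical
  rintro _ ⟨t, ht, rfl⟩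
  refine ⟨fun i => if i ∈ T then t i else 0, fun i _ => ?_, ?_⟩
  · dsimp only
    split_ifs with hi
    exacts [ht i hi, le_rfl]
  · simp [ite_smul, Finset.sum_ite_mem, Finset.inter_eq_right.2 h]

/-- Carathéodory's reduction step: shift the coefficients of `x` along the relation `g` until
one of them vanishes. -/
theorem exists_mem_conicHull_erase [DecidableEq ι] {x : V} (hx : x ∈ conicHull v s)
    {g : ι → ℝ} (hg : ∑ i ∈ s, g i • v i = 0) (hpos : ∃ j ∈ s, 0 < g j) :
    ∃ j ∈ s, x ∈ conicHull v (s.erase j) := by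
  obtain ⟨t, ht, rfl⟩ := hx
  have hP : (s.filter (0 < g ·)).Nonempty := by
    obtain ⟨j, hj, hgj⟩ := hpos
    exact ⟨j, Finset.mem_filter.2 ⟨hj, hgj⟩⟩
  obtain ⟨j, hjP, hjmin⟩ := (s.filter (0 < g ·)).exists_min_image (fun i => t i / g i) hP
  obtain ⟨hjs, hgj⟩ := Finset.mem_filter.1 hjP
  refine ⟨j, hjs, fun i => t i - t j / g j * g i, fun i hi => ?_, ?_⟩
  · have his := Finset.mem_of_mem_erase hi
    rcases le_or_gt (g i) 0 with hgi | hgi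
    · nlinarith [ht i his, div_nonneg (ht j hjs) hgj.le]
    · have := (le_div_iff₀ hgi).1 (hjmin i (Finset.mem_filter.2 ⟨his, hgi⟩))
      linarith
  · rw [Finset.sum_erase _ (by simp [div_mul_cancel₀ _ hgj.ne'])]
    simp [sub_smul, mul_smul, Finset.sum_sub_distrib, ← Finset.smul_sum, hg]

theorem exists_linearIndepOn_of_mem_conicHull {x : V} (hx : x ∈ conicHull v s) :
    ∃ T ⊆ s, LinearIndepOn ℝ v (T : Set ι) ∧ x ∈ conicHull v T := by
  classical
  induction s using Finset.strongInduction with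
  | H s ih =>
    by_cases hli : LinearIndepOn ℝ v (s : Set ι)
    · exact ⟨s, subset_rfl, hli, hx⟩
    obtain ⟨g, hg, i, hi, hgi⟩ := not_linearIndepOn_finset_iff.1 hli
    obtain ⟨j, hj, hxj⟩ : ∃ j ∈ s, x ∈ conicHull v (s.erase j) := by
      rcases hgi.lt_or_gt with hneg | hpos
      · exact exists_mem_conicHull_erase hx (g := -g) (by simp [neg_smul, hg])
          ⟨i, hi, neg_pos.2 hneg⟩
      · exact exists_mem_conicHull_erase hx hg ⟨i, hi, hpos⟩
    obtain ⟨T, hT, hTli, hxT⟩ := ih _ (Finset.erase_ssubset hj) hxj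
    exact ⟨T, hT.trans (Finset.erase_subset _ _), hTli, hxT⟩

theorem isClosed_conicHull_of_linearIndepOn (hli : LinearIndepOn ℝ v (s : Set ι)) :
    IsClosed (conicHull v s) := by
  classical
  set φ := Fintype.linearCombination ℝ (fun i : s => v i)
  have hφ : IsClosedMap φ := (LinearMap.isClosedEmbedding_of_injective (LinearMap.ker_eq_bot.2
    (linearIndependent_iff_injective_fintypeLinearCombination.1 hli))).isClosedMap
  have himage : conicHull v s = φ '' {t | 0 ≤ t} := by
    ext x
    constructor
    · rintro ⟨t, ht, rfl⟩
      refine ⟨fun i => t i, fun i => ht i i.2, ?_⟩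
      simp [φ, Fintype.linearCombination_apply, Finset.sum_attach s (fun i => t i • v i)]
    · rintro ⟨t, ht, rfl⟩
      refine ⟨fun i => if h : i ∈ s then t ⟨i, h⟩ else 0,
        fun i hi => by simpa [hi] using ht ⟨i, hi⟩, ?_⟩
      simp [φ, Fintype.linearCombination_apply, ← Finset.sum_coe_sort s]
  rw [himage]
  exact hφ _ (isClosed_le continuous_const continuous_id)

theorem isClosed_conicHull (v : ι → V) (s : Finset ι) : IsClosed (conicHull v s) := by
  classical
  have h : conicHull v s = ⋃ (T : Finset ι) (_ : T ∈ s.powerset.filter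
      (fun T : Finset ι => LinearIndepOn ℝ v (T : Set ι))), conicHull v T := by
    refine Set.Subset.antisymm (fun x hx => ?_) (Set.iUnion₂_subset fun T hT => ?_)
    · obtain ⟨T, hTs, hli, hxT⟩ := exists_linearIndepOn_of_mem_conicHull hx
      exact Set.mem_biUnion (Finset.mem_filter.2 ⟨Finset.mem_powerset.2 hTs, hli⟩) hxT
    · exact conicHull_mono (Finset.mem_powerset.1 (Finset.mem_filter.1 hT).1)
  rw [h]
  exact isClosed_biUnion_finset fun T hT =>
    isClosed_conicHull_of_linearIndepOn (Finset.mem_filter.1 hT).2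

/-- **Farkas' lemma**. -/
theorem exists_dual_of_notMem_conicHull {y : V} (hy : y ∉ conicHull v s) :
    ∃ f : StrongDual ℝ V, (∀ i ∈ s, f (v i) ≤ 0) ∧ 0 < f y := by
  obtain ⟨f, u, hfK, hfy⟩ :=
    geometric_hahn_banach_closed_point (convex_conicHull v s) (isClosed_conicHull v s) hy
  have hu : 0 < u := by simpa using hfK 0 zero_mem_conicHull
  refine ⟨f, fun i hi => ?_, hu.trans hfy⟩
  by_contra! h
  have := hfK _ (smul_mem_conicHull (div_pos hu h).le (mem_conicHull_of_mem hi))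
  rw [map_smul, smul_eq_mul, div_mul_cancel₀ _ h.ne'] at this
  exact lt_irrefl _ this

end ConicHull

section Polyhedron

variable [NormedAddCommGroup V] [InnerProductSpace ℝ V]

def polyhedron (s : Finset (V × ℝ)) : Set V :=
  {X | ∀ p ∈ s, ⟪p.1, X⟫ ≤ p.2}

theorem convex_polyhedron (s : Finset (V × ℝ)) : Convex ℝ (polyhedron s) := by
  simp only [polyhedron, Set.ofPred_forall]
  exact convex_iInter₂ fun p _ => convex_halfSpace_le (innerₗ V p.1).isLinear p.2

theorem polarCone_polarCone_image_subset_conicHull [CompleteSpace V] {ι : Type*} (v : ι → V)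
    (s : Finset ι) : polarCone (polarCone (v '' s)) ⊆ conicHull v s := by
  intro Y hY
  by_contra hnot
  obtain ⟨f, hf, hfY⟩ := exists_dual_of_notMem_conicHull hnot
  set w := (InnerProductSpace.toDual ℝ V).symm f
  have hw : w ∈ polarCone (v '' s) := by
    rintro _ ⟨i, hi, rfl⟩
    rw [InnerProductSpace.toDual_symm_apply]
    exact hf i hi
  have := hY w hw
  rw [real_inner_comm, InnerProductSpace.toDual_symm_apply] at this
  linarith

/-- Gale's theorem of the alternative. -/
theorem exists_certificate_of_polyhedron_eq_empty [CompleteSpace V] {s : Finset (V × ℝ)}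
    (h : polyhedron s = ∅) :
    ∃ t : V × ℝ → ℝ, (∀ p ∈ s, 0 ≤ t p) ∧ ∑ p ∈ s, t p • p.1 = 0 ∧ ∑ p ∈ s, t p * p.2 = -1 := by
  by_cases hmem : ((0 : V), (-1 : ℝ)) ∈ conicHull (fun p : V × ℝ => p) s
  · obtain ⟨t, ht, hsum⟩ := hmem
    exact ⟨t, ht, by simpa [Prod.fst_sum] using congrArg Prod.fst hsum,
      by simpa [Prod.snd_sum] using congrArg Prod.snd hsum⟩
  obtain ⟨f, hf, hf0⟩ := exists_dual_of_notMem_conicHull hmem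
  set g : StrongDual ℝ V := f.comp (ContinuousLinearMap.inl ℝ V ℝ)
  have hf_apply (x : V) (r : ℝ) : f (x, r) = g x + r * f (0, 1) := by
    rw [show (x, r) = (x, 0) + r • ((0 : V), (1 : ℝ)) by ext <;> simp, map_add, map_smul]
    rfl
  have hc : f (0, 1) < 0 := by
    rw [hf_apply] at hf0
    simpa using hf0
  have hX : (-f (0, 1))⁻¹ • (InnerProductSpace.toDual ℝ V).symm g ∈ polyhedron s := by
    intro p hp
    have hfp := hf p hp
    rw [hf_apply] at hfp
    rw [real_inner_smul_right, real_inner_comm, InnerProductSpace.toDual_symm_apply,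
      inv_mul_le_iff₀ (neg_pos.2 hc)]
    linarith
  simp [h] at hX

theorem inner_sum_smul_fst_le {s : Finset (V × ℝ)} {t : V × ℝ → ℝ} (ht : ∀ p ∈ s, 0 ≤ t p)
    {X : V} (hX : X ∈ polyhedron s) : ⟪∑ p ∈ s, t p • p.1, X⟫ ≤ ∑ p ∈ s, t p * p.2 := by
  rw [sum_inner]
  exact Finset.sum_le_sum fun p hp => by
    rw [real_inner_smul_left]
    exact mul_le_mul_of_nonneg_left (hX p hp) (ht p hp)

theorem polarCone_fst_subset_asympCone (s : Finset (V × ℝ)) :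
    polarCone (Prod.fst '' (s : Set (V × ℝ))) ⊆ asympCone (polyhedron s) := by
  intro Z hZ
  refine Set.Subset.antisymm ?_ fun X hX =>
    ⟨X, hX, 0, ⟨0, le_rfl, (zero_smul ℝ Z).symm⟩, add_zero X⟩
  rintro _ ⟨X, hX, _, ⟨t, ht, rfl⟩, rfl⟩ p hp
  have := hZ p.1 ⟨p, hp, rfl⟩
  rw [real_inner_comm] at this
  rw [inner_add_right, real_inner_smul_right]
  nlinarith [hX p hp]

theorem exists_lt_forall_inner_le_of_forall_inner_lt [CompleteSpace V] {s : Finset (V × ℝ)}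
    (hne : (polyhedron s).Nonempty) {Y : V} {M : ℝ} (hlt : ∀ X ∈ polyhedron s, ⟪Y, X⟫ < M) :
    ∃ M' < M, ∀ X ∈ polyhedron s, ⟪Y, X⟫ ≤ M' := by
  classical
  obtain ⟨X₁, hX₁⟩ := hne
  have hq : (-Y, -M) ∉ s := fun hq => by
    have := hX₁ _ hq
    rw [inner_neg_left] at this
    linarith [hlt X₁ hX₁]
  have hempty : polyhedron (insert (-Y, -M) s) = ∅ := by
    refine Set.eq_empty_of_forall_notMem fun X hX => ?_
    have := hX _ (Finset.mem_insert_self _ _)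
    rw [inner_neg_left] at this
    linarith [hlt X fun p hp => hX p (Finset.mem_insert_of_mem hp)]
  obtain ⟨u, hu, hsum₁, hsum₂⟩ := exists_certificate_of_polyhedron_eq_empty hempty
  rw [Finset.sum_insert hq] at hsum₁ hsum₂
  simp only at hsum₁ hsum₂
  have hbound (X : V) (hX : X ∈ polyhedron s) : u (-Y, -M) * ⟪Y, X⟫ ≤ u (-Y, -M) * M - 1 := by
    have := inner_sum_smul_fst_le (fun p hp => hu p (Finset.mem_insert_of_mem hp)) hX
    rw [eq_neg_of_add_eq_zero_right hsum₁, smul_neg, neg_neg, real_inner_smul_left] at this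
    linarith
  have hu₀ : 0 < u (-Y, -M) := by
    refine (hu _ (Finset.mem_insert_self _ _)).lt_of_ne fun h => ?_
    have := hbound X₁ hX₁
    rw [← h] at this
    linarith
  refine ⟨M - (u (-Y, -M))⁻¹, by linarith [inv_pos.2 hu₀], fun X hX => ?_⟩
  rw [← mul_le_mul_iff_right₀ hu₀, mul_sub, mul_inv_cancel₀ hu₀.ne']
  exact hbound X hX

theorem exists_forall_inner_le_of_bddAbove [CompleteSpace V] {s : Finset (V × ℝ)}
    (hne : (polyhedron s).Nonempty) {Y : V}
    (hbdd : BddAbove ((fun X => ⟪Y, X⟫) '' polyhedron s)) :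
    ∃ X₀ ∈ polyhedron s, ∀ X ∈ polyhedron s, ⟪Y, X⟫ ≤ ⟪Y, X₀⟫ := by
  by_contra! hlt
  obtain ⟨M', hM', hle⟩ := exists_lt_forall_inner_le_of_forall_inner_lt hne fun X hX => by
    obtain ⟨X', hX', hXX'⟩ := hlt X hX
    exact hXX'.trans_le (le_csSup hbdd ⟨X', hX', rfl⟩)
  exact hM'.not_ge (csSup_le (hne.image _) (Set.forall_mem_image.2 hle))

theorem bddAbove_inner_of_mem_polarCone [CompleteSpace V] {s : Finset (V × ℝ)} {Y : V}
    (hY : Y ∈ polarCone (polarCone (Prod.fst '' (s : Set (V × ℝ))))) :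
    BddAbove ((fun X => ⟪Y, X⟫) '' polyhedron s) := by
  obtain ⟨t, ht, rfl⟩ := polarCone_polarCone_image_subset_conicHull Prod.fst s hY
  exact ⟨_, Set.forall_mem_image.2 fun X hX => inner_sum_smul_fst_le ht hX⟩

theorem eventually_add_smul_mem_polyhedron {s : Finset (V × ℝ)} {X W : V}
    (hX : X ∈ polyhedron s) (hW : ∀ p ∈ s, ⟪p.1, X⟫ = p.2 → ⟪p.1, W⟫ ≤ 0) :
    ∀ᶠ ε in 𝓝[>] (0 : ℝ), X + ε • W ∈ polyhedron s := by
  refine (Filter.eventually_all_finset s).2 fun p hp => ?_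
  rcases (hX p hp).eq_or_lt with hact | hlt
  · filter_upwards [self_mem_nhdsWithin] with ε (hε : 0 < ε)
    rw [inner_add_right, real_inner_smul_right]
    nlinarith [hW p hp hact]
  · have hcont : Tendsto (fun ε : ℝ => ⟪p.1, X + ε • W⟫) (𝓝 0) (𝓝 ⟪p.1, X⟫) := by
      have : Continuous fun ε : ℝ => ⟪p.1, X + ε • W⟫ := by fun_prop
      simpa using this.tendsto 0
    exact nhdsWithin_le_nhds ((hcont.eventually (gt_mem_nhds hlt)).mono fun _ h => h.le)

theorem tangCone_polyhedron {s : Finset (V × ℝ)} {X : V} (hX : X ∈ polyhedron s) :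
    tangCone (polyhedron s) X = polarCone (Prod.fst '' {p | p ∈ s ∧ ⟪p.1, X⟫ = p.2}) := by
  ext W
  simp only [polarCone, Set.mem_ofPred_eq, Set.forall_mem_image]
  constructor
  · rintro ⟨t, ht, c, hc, rfl⟩ p ⟨hp, hact⟩
    rw [real_inner_comm, real_inner_smul_right, inner_sub_right, hact]
    nlinarith [hc p hp]
  · intro hW
    obtain ⟨ε, hmem, hε⟩ := ((eventually_add_smul_mem_polyhedron hX fun p hp hact => by
      rw [real_inner_comm]; exact hW ⟨hp, hact⟩).and eventually_mem_nhdsWithin).exists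
    refine ⟨ε⁻¹, inv_nonneg.2 (le_of_lt hε), _, hmem, ?_⟩
    rw [add_sub_cancel_left, smul_smul, inv_mul_cancel₀ (ne_of_gt hε), one_smul]

end Polyhedron

section Face

variable [NormedAddCommGroup V] [InnerProductSpace ℝ V] {C F : Set V}

theorem mem_normCone_iff {X Y : V} : Y ∈ normCone C X ↔ ∀ c ∈ C, ⟪Y, c⟫ ≤ ⟪Y, X⟫ := by
  constructor
  · intro hY c hc
    have := hY (c - X) ⟨1, zero_le_one, c, hc, (one_smul ℝ _).symm⟩
    rw [inner_sub_right] at this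
    linarith
  · rintro hY _ ⟨t, ht, c, hc, rfl⟩
    rw [real_inner_smul_right, inner_sub_right]
    nlinarith [hY c hc]

theorem IsFace.subset (hF : IsFace C F) : F ⊆ C := by
  obtain ⟨-, lam, c, -, rfl⟩ := hF
  exact fun H hH => hH.1

theorem IsFace.convex (hC : Convex ℝ C) (hF : IsFace C F) : Convex ℝ F := by
  obtain ⟨-, lam, c, -, rfl⟩ := hF
  exact hC.inter (convex_hyperplane (innerₗ V lam).isLinear c)

theorem isFace_setOf_inner_eq {X Y : V} (hX : X ∈ C) (hmax : ∀ c ∈ C, ⟪Y, c⟫ ≤ ⟪Y, X⟫) :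
    IsFace C {H | H ∈ C ∧ ⟪Y, H⟫ = ⟪Y, X⟫} :=
  ⟨⟨X, hX, rfl⟩, Y, _, hmax, rfl⟩

theorem IsFace.eq_setOf_inner_eq (hF : IsFace C F) {X Y : V} (hX : X ∈ intrinsicInterior ℝ F)
    (hY : Y ∈ intrinsicInterior ℝ (normCone C X)) : F = {H | H ∈ C ∧ ⟪Y, H⟫ = ⟪Y, X⟫} := by
  have hXF : X ∈ F := intrinsicInterior_subset hX
  have hYmax := mem_normCone_iff.1 (intrinsicInterior_subset hY)
  have hFC := hF.subset
  obtain ⟨-, lam, c, hsupp, rfl⟩ := hF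
  ext H
  refine ⟨fun hH => ⟨hH.1, (hYmax H hH.1).antisymm ?_⟩,
    fun ⟨hHC, hYH⟩ => ⟨hHC, (hsupp H hHC).antisymm ?_⟩⟩
  · -- push `X` past `H` inside `F`
    obtain ⟨ε, hε, hmem⟩ := exists_add_smul_sub_mem_of_mem_intrinsicInterior hX hH
    have := hYmax _ (hFC hmem)
    rw [inner_add_right, real_inner_smul_right, inner_sub_right] at this
    nlinarith
  · -- push `Y` past the normal vector `lam` inside the normal cone
    have hlam : lam ∈ normCone C X := mem_normCone_iff.2 fun c' hc' => hXF.2 ▸ hsupp c' hc'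
    obtain ⟨ε, hε, hmem⟩ := exists_add_smul_sub_mem_of_mem_intrinsicInterior hY hlam
    have := mem_normCone_iff.1 hmem H hHC
    simp only [inner_add_left, inner_sub_left, real_inner_smul_left] at this
    nlinarith [hXF.2]

theorem normCone_subset_polarCone_asympCone {X : V} (hX : X ∈ C) :
    normCone C X ⊆ polarCone (asympCone C) := by
  intro Y hY Z hZ
  have hXZ : X + Z ∈ C := hZ ▸ Set.add_mem_add hX ⟨1, zero_le_one, (one_smul ℝ Z).symm⟩
  have := mem_normCone_iff.1 hY _ hXZ
  rw [inner_add_right] at this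
  linarith

theorem neg_mem_tangCone_of_mem_intrinsicInterior (hFC : F ⊆ C) {X W : V}
    (hX : X ∈ intrinsicInterior ℝ F) (hW : W ∈ tangCone F X) : -W ∈ tangCone C X := by
  obtain ⟨t, ht, f, hf, rfl⟩ := hW
  obtain ⟨ε, hε, hmem⟩ := exists_add_smul_sub_mem_of_mem_intrinsicInterior hX hf
  refine ⟨t / ε, div_nonneg ht hε.le, _, hFC hmem, ?_⟩
  rw [add_sub_cancel_left, smul_smul, div_mul_cancel₀ _ hε.ne', ← smul_neg, neg_sub]

theorem mem_tangCone_setOf_inner_eq {X Y W : V} (hX : X ∈ C) (hW : W ∈ tangCone C X)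
    (hYW : ⟪Y, W⟫ = 0) : W ∈ tangCone {H | H ∈ C ∧ ⟪Y, H⟫ = ⟪Y, X⟫} X := by
  obtain ⟨t, ht, c, hc, rfl⟩ := hW
  rw [real_inner_smul_right, mul_eq_zero, inner_sub_right, sub_eq_zero] at hYW
  rcases hYW with rfl | hYc
  · exact ⟨0, le_rfl, X, ⟨hX, rfl⟩, by simp⟩
  · exact ⟨t, ht, c, ⟨hc, hYc⟩, rfl⟩

theorem aFplus_inter_eq_empty {F' : Set V} (hF : IsFace C F) (hF' : IsFace C F') (hne : F ≠ F') :
    aFplus C F ∩ aFplus C F' = ∅ := by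
  refine Set.eq_empty_of_forall_notMem fun Y ⟨hY, hY'⟩ => hne ?_
  obtain ⟨X, hX, hYX⟩ := Set.mem_iUnion₂.1 hY
  obtain ⟨X', hX', hYX'⟩ := Set.mem_iUnion₂.1 hY'
  have hval : ⟪Y, X'⟫ = ⟪Y, X⟫ :=
    (mem_normCone_iff.1 (intrinsicInterior_subset hYX) X'
      (hF'.subset (intrinsicInterior_subset hX'))).antisymm
    (mem_normCone_iff.1 (intrinsicInterior_subset hYX') X
      (hF.subset (intrinsicInterior_subset hX)))
  rw [hF.eq_setOf_inner_eq hX hYX, hF'.eq_setOf_inner_eq hX' hYX', hval]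

theorem aFplus_subset_polarCone_asympCone (hF : IsFace C F) :
    aFplus C F ⊆ polarCone (asympCone C) :=
  Set.iUnion₂_subset fun _ hX => intrinsicInterior_subset.trans
    (normCone_subset_polarCone_asympCone (hF.subset (intrinsicInterior_subset hX)))

theorem polarCone_asympCone_subset_iUnion_aFplus [FiniteDimensional ℝ V] (hC : IsFGConvex C)
    (hne : C.Nonempty) : polarCone (asympCone C) ⊆ ⋃ F ∈ {F | IsFace C F}, aFplus C F := by
  obtain ⟨s, rfl⟩ : ∃ s, C = polyhedron s := hC
  intro Y hY
  obtain ⟨X₀, hX₀, hmax⟩ := exists_forall_inner_le_of_bddAbove hne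
    (bddAbove_inner_of_mem_polarCone (polarCone_anti (polarCone_fst_subset_asympCone s) hY))
  have hF := isFace_setOf_inner_eq hX₀ hmax
  obtain ⟨X, hX⟩ := Set.Nonempty.intrinsicInterior (hF.convex (convex_polyhedron s)) hF.1
  obtain ⟨hXC, hYX⟩ := intrinsicInterior_subset hX
  have hN : normCone (polyhedron s) X =
      polarCone (polarCone (Prod.fst '' {p | p ∈ s ∧ ⟪p.1, X⟫ = p.2})) := by
    rw [← tangCone_polyhedron hXC]
    rfl
  refine Set.mem_biUnion hF (Set.mem_biUnion hX ?_)
  rw [hN]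
  refine mem_intrinsicInterior_polarCone_polarCone ?_ fun W hW hYW => ?_
  · rw [← hN, mem_normCone_iff]
    exact hYX ▸ hmax
  · rw [← tangCone_polyhedron hXC] at hW ⊢
    have := mem_tangCone_setOf_inner_eq hXC hW hYW
    rw [hYX] at this
    exact neg_mem_tangCone_of_mem_intrinsicInterior hF.subset hX this

end Face

theorem stmt_4 (C : Set E) (hC : IsFGConvex C) (hne : C.Nonempty) :
    (∀ F F' : Set E, IsFace C F → IsFace C F' → F ≠ F' →
      aFplus C F ∩ aFplus C F' = ∅) ∧
    (∀ F : Set E, IsFace C F → aFplus C F ⊆ polarCone (asympCone C)) ∧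
    polarCone (asympCone C) = ⋃ F ∈ {F : Set E | IsFace C F}, aFplus C F :=
  ⟨fun _ _ => aFplus_inter_eq_empty, fun _ => aFplus_subset_polarCone_asympCone,
    (polarCone_asympCone_subset_iUnion_aFplus hC hne).antisymm
      (Set.iUnion₂_subset fun _ => aFplus_subset_polarCone_asympCone)⟩
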